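/- arXiv:2107.14705 — 3 statements merged into one kernel-verified Lean document; each statement's English description precedes it below -/
import Mathlib

section
/- Under the MMSB setup, let η = min_{1≤k≤K} ((V_{*,1}(𝓘,:) V_{*,1}(𝓘,:)')^{-1}𝟏)(k) and π_min = min_{1≤k≤K} Σ_{i=1}^n Π(i,k). Then η ≥ (τ+δ_min)² π_min / ((τ+δ_max)² K λ_1(Π'Π)); in particular η > 0. -/
/-!
Write `D = 𝒟_τ` and `G = Π' D⁻¹ Π`. Since `𝓛_τ = D^{-1/2} Π P Π' D^{-1/2}` and `E` is invertible,
`V = 𝓛_τ V E⁻¹ = D^{-1/2} Π B` for a `K × K` matrix `B`, and `V'V = I` reads `B' G B = I`, i.e.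
`G = (B B')⁻¹`. At the pure node of community `k` the row of `V` is a positive multiple of `B(k,:)`,
so `V_{*,1}(𝓘,:) = diag(b)⁻¹ B` with `b_k = ‖B(k,:)‖`, and the vector in question is
`(diag(b)⁻¹ B B' diag(b)⁻¹)⁻¹ 𝟏 = diag(b) G b`. Cauchy–Schwarz applied to `(B B⁻¹)(k,k) = 1` gives
`b_k² G(k,k) ≥ 1`, while `G(k,k) ≤ (Π'Π)(k,k) / (τ + δ_min) ≤ K λ₁(Π'Π) / (τ + δ_min)`; so every
`b_k b_l` is at least `(τ + δ_min) / (K λ₁(Π'Π))`. Finally `G` is entrywise nonnegative with row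
sums `Σ_i Π(i,k) / (τ + 𝒟(i,i)) ≥ π_min / (τ + δ_max)`.
-/

open Matrix BigOperators

noncomputable def rowNorm {m k : ℕ} (M : Matrix (Fin m) (Fin k) ℝ) (i : Fin m) : ℝ :=
  Real.sqrt (∑ j, (M i j) ^ 2)

namespace Matrix

section Algebra

variable {R : Type*} {m κ : Type*} [Fintype m] [Fintype κ] [DecidableEq κ]

theorem exists_eq_mul_of_mul_mul_transpose_eq {κ' : Type*} [Fintype κ'] [Field R]
    (A : Matrix m κ' R) (M : Matrix κ' κ' R) {V : Matrix m κ R} {e : κ → R} (hV : Vᵀ * V = 1)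
    (he : ∀ k, e k ≠ 0) (h : A * M * Aᵀ = V * diagonal e * Vᵀ) :
    ∃ B : Matrix κ' κ R, V = A * B := by
  refine ⟨M * Aᵀ * V * diagonal e⁻¹, ?_⟩
  have hLV : A * M * Aᵀ * V = V * diagonal e := by
    rw [h, Matrix.mul_assoc _ Vᵀ V, hV, Matrix.mul_one]
  have hee : diagonal e * diagonal e⁻¹ = 1 := by
    rw [diagonal_mul_diagonal, ← diagonal_one]
    exact congrArg diagonal (funext fun k => mul_inv_cancel₀ (he k))
  calc V = V * diagonal e * diagonal e⁻¹ := by rw [Matrix.mul_assoc, hee, Matrix.mul_one]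
    _ = A * (M * Aᵀ * V * diagonal e⁻¹) := by rw [← hLV]; simp only [Matrix.mul_assoc]

theorem mul_mul_transpose_eq_one_of_transpose_mul_mul_eq_one [CommRing R] {B G : Matrix κ κ R}
    (h : Bᵀ * G * B = 1) : G * (B * Bᵀ) = 1 := by
  rw [Matrix.mul_assoc] at h
  rw [← Matrix.mul_assoc]
  exact mul_eq_one_comm.mp h

theorem inv_diagonal_mul_mul_transpose [Field R] {B G : Matrix κ κ R} {c : κ → R}
    (hc : ∀ k, c k ≠ 0) (h : Bᵀ * G * B = 1) :
    (diagonal c * B * (diagonal c * B)ᵀ)⁻¹ = diagonal c⁻¹ * G * diagonal c⁻¹ := by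
  have hcc : diagonal c⁻¹ * diagonal c = 1 := by
    rw [diagonal_mul_diagonal, ← diagonal_one]
    exact congrArg diagonal (funext fun k => inv_mul_cancel₀ (hc k))
  refine inv_eq_left_inv ?_
  calc diagonal c⁻¹ * G * diagonal c⁻¹ * (diagonal c * B * (diagonal c * B)ᵀ)
      = diagonal c⁻¹ * (G * (B * Bᵀ)) * diagonal c := by
        simp only [transpose_mul, diagonal_transpose, Matrix.mul_assoc]
        rw [← Matrix.mul_assoc (diagonal c⁻¹) (diagonal c), hcc, Matrix.one_mul]
    _ = 1 := by rw [mul_mul_transpose_eq_one_of_transpose_mul_mul_eq_one h, Matrix.mul_one, hcc]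

theorem one_le_sum_sq_mul_diag {B G : Matrix κ κ ℝ} (h : Bᵀ * G * B = 1) (k : κ) :
    1 ≤ (∑ l, B k l ^ 2) * G k k := by
  have hright : B * (Bᵀ * G) = 1 := by
    rw [← Matrix.mul_assoc]
    exact mul_eq_one_comm.mp (mul_mul_transpose_eq_one_of_transpose_mul_mul_eq_one h)
  have hgram : (Bᵀ * G)ᵀ * (Bᵀ * G) = Gᵀ := by
    rw [transpose_mul, transpose_transpose, Matrix.mul_assoc, hright, Matrix.mul_one]
  calc (1 : ℝ) = (∑ l, B k l * (Bᵀ * G) l k) ^ 2 := by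
        rw [← mul_apply, hright, one_apply_eq, one_pow]
    _ ≤ (∑ l, B k l ^ 2) * ∑ l, (Bᵀ * G) l k ^ 2 := Finset.sum_mul_sq_le_sq_mul_sq _ _ _
    _ = (∑ l, B k l ^ 2) * G k k := by
        rw [← transpose_apply G, ← hgram, mul_apply]
        simp only [transpose_apply, sq]

end Algebra

theorem submatrix_diagonal_mul_mul {R l m κ κ' : Type*} [CommRing R] [Fintype l] [Fintype m]
    [Fintype κ] [DecidableEq m] [DecidableEq l] (s : m → R)
    (P : Matrix m κ R) (B : Matrix κ κ' R) (f : l → m) :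
    (diagonal s * P * B).submatrix f id = diagonal (s ∘ f) * P.submatrix f id * B := by
  ext i j
  rw [Matrix.mul_assoc, Matrix.mul_assoc, submatrix_apply, diagonal_mul, diagonal_mul]
  simp only [id, mul_apply, submatrix_apply, Function.comp_apply]

section WeightedGram

variable {m κ : Type*} [Fintype m] [DecidableEq m]

theorem transpose_mul_diagonal_mul_apply (A : Matrix m κ ℝ) (w : m → ℝ) (k l : κ) :
    (Aᵀ * diagonal w * A) k l = ∑ i, w i * (A i k * A i l) := by
  rw [mul_apply]
  simp only [mul_diagonal, transpose_apply]
  exact Finset.sum_congr rfl fun i _ => by ring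

variable {A : Matrix m κ ℝ} {w : m → ℝ}

theorem transpose_mul_diagonal_mul_nonneg (hA : ∀ i k, 0 ≤ A i k) (hw : ∀ i, 0 ≤ w i) (k l : κ) :
    0 ≤ (Aᵀ * diagonal w * A) k l := by
  rw [transpose_mul_diagonal_mul_apply]
  exact Finset.sum_nonneg fun i _ => mul_nonneg (hw i) (mul_nonneg (hA i k) (hA i l))

theorem transpose_mul_diagonal_mul_diag_le {c : ℝ} (hw : ∀ i, w i ≤ c) (k : κ) :
    (Aᵀ * diagonal w * A) k k ≤ c * (Aᵀ * A) k k := by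
  rw [transpose_mul_diagonal_mul_apply, mul_apply, Finset.mul_sum]
  exact Finset.sum_le_sum fun i _ => mul_le_mul_of_nonneg_right (hw i) (mul_self_nonneg _)

theorem le_sum_transpose_mul_diagonal_mul_apply [Fintype κ] (hA : ∀ i k, 0 ≤ A i k)
    (hA1 : ∀ i, ∑ k, A i k = 1) {c : ℝ} (hw : ∀ i, c ≤ w i) (k : κ) :
    c * ∑ i, A i k ≤ ∑ l, (Aᵀ * diagonal w * A) k l := by
  simp only [transpose_mul_diagonal_mul_apply, Finset.mul_sum]
  rw [Finset.sum_comm]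
  refine Finset.sum_le_sum fun i _ => ?_
  rw [← Finset.mul_sum, ← Finset.mul_sum, hA1, mul_one]
  exact mul_le_mul_of_nonneg_right (hw i) (hA i k)

end WeightedGram

theorem PosSemidef.diag_le_card_mul_iSup_eigenvalues {ι : Type*} [Fintype ι] [DecidableEq ι]
    {A : Matrix ι ι ℝ} (hA : A.PosSemidef) (k : ι) :
    A k k ≤ Fintype.card ι * ⨆ i, hA.1.eigenvalues i := by
  calc A k k ≤ A.trace :=
        Finset.single_le_sum (f := fun i => A i i) (fun i _ => hA.diag_nonneg) (Finset.mem_univ k)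
    _ = ∑ i, hA.1.eigenvalues i := by simpa using hA.1.trace_eq_sum_eigenvalues
    _ ≤ ∑ _i : ι, ⨆ i, hA.1.eigenvalues i := Finset.sum_le_sum fun i _ => Finite.le_ciSup _ i
    _ = Fintype.card ι * ⨆ i, hA.1.eigenvalues i := by simp

end Matrix

noncomputable def rowNormalize {m k : ℕ} (M : Matrix (Fin m) (Fin k) ℝ) :
    Matrix (Fin m) (Fin k) ℝ :=
  fun i j => M i j / rowNorm M i

section RowNormalize

variable {m k : ℕ}

theorem rowNorm_sq (M : Matrix (Fin m) (Fin k) ℝ) (i : Fin m) :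
    rowNorm M i ^ 2 = ∑ j, M i j ^ 2 :=
  Real.sq_sqrt (Finset.sum_nonneg fun _ _ => sq_nonneg _)

theorem rowNorm_diagonal_mul (c : Fin m → ℝ) (M : Matrix (Fin m) (Fin k) ℝ) (i : Fin m) :
    rowNorm (diagonal c * M) i = |c i| * rowNorm M i := by
  simp only [rowNorm, diagonal_mul, mul_pow, ← Finset.mul_sum]
  rw [Real.sqrt_mul (sq_nonneg _), Real.sqrt_sq_eq_abs]

theorem rowNormalize_diagonal_mul {c : Fin m → ℝ} (hc : ∀ i, 0 < c i)
    (M : Matrix (Fin m) (Fin k) ℝ) : rowNormalize (diagonal c * M) = rowNormalize M := by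
  ext i j
  rw [rowNormalize, rowNormalize, rowNorm_diagonal_mul, diagonal_mul, abs_of_pos (hc i),
    mul_div_mul_left _ _ (hc i).ne']

theorem rowNormalize_eq_diagonal_mul (M : Matrix (Fin m) (Fin k) ℝ) :
    rowNormalize M = diagonal (fun i => (rowNorm M i)⁻¹) * M := by
  ext i j
  rw [rowNormalize, diagonal_mul, div_eq_inv_mul]

theorem rowNormalize_submatrix {l : ℕ} (M : Matrix (Fin m) (Fin k) ℝ) (f : Fin l → Fin m) :
    (rowNormalize M).submatrix f id = rowNormalize (M.submatrix f id) := rfl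

theorem div_le_inv_rowNormalize_mul_transpose_mulVec_one {B G : Matrix (Fin k) (Fin k) ℝ}
    (h : Bᵀ * G * B = 1) (hG : ∀ i j, 0 ≤ G i j) {a r : ℝ} (ha : ∀ i, G i i ≤ a)
    (hr : ∀ i, r ≤ ∑ j, G i j) (i : Fin k) :
    r / a ≤ ((rowNormalize B * (rowNormalize B)ᵀ)⁻¹ *ᵥ fun _ => 1) i := by
  have hnorm : ∀ j, 1 ≤ rowNorm B j ^ 2 * a := fun j =>
    (rowNorm_sq B j ▸ one_le_sum_sq_mul_diag h j).trans
      (mul_le_mul_of_nonneg_left (ha j) (sq_nonneg _))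
  have ha0 : 0 < a := by nlinarith [hnorm i, sq_nonneg (rowNorm B i)]
  have hsq : ∀ j, a⁻¹ ≤ rowNorm B j ^ 2 := fun j =>
    (inv_le_iff_one_le_mul₀ ha0).2 (hnorm j)
  have hnonneg : ∀ j, 0 ≤ rowNorm B j := fun j => Real.sqrt_nonneg _
  have hprod : ∀ j j', a⁻¹ ≤ rowNorm B j * rowNorm B j' := fun j j' => by
    rw [← pow_le_pow_iff_left₀ (inv_nonneg.2 ha0.le)
      (mul_nonneg (hnonneg j) (hnonneg j')) two_ne_zero, sq, mul_pow]
    exact mul_le_mul (hsq j) (hsq j') (inv_nonneg.2 ha0.le) (sq_nonneg _)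
  have hpos : ∀ j, rowNorm B j ≠ 0 := fun j h0 => by
    have := hnorm j
    rw [h0] at this
    norm_num at this
  rw [rowNormalize_eq_diagonal_mul,
    inv_diagonal_mul_mul_transpose (fun j => inv_ne_zero (hpos j)) h]
  calc r / a ≤ a⁻¹ * ∑ j, G i j := by
        rw [div_eq_inv_mul]; exact mul_le_mul_of_nonneg_left (hr i) (inv_nonneg.2 ha0.le)
    _ ≤ ∑ j, rowNorm B i * rowNorm B j * G i j := by
        rw [Finset.mul_sum]
        exact Finset.sum_le_sum fun j _ => mul_le_mul_of_nonneg_right (hprod i j) (hG i j)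
    _ = _ := by
        simp only [mulVec, dotProduct, mul_one, mul_diagonal, diagonal_mul, Pi.inv_apply, inv_inv]
        exact Finset.sum_congr rfl fun j _ => by ring

end RowNormalize

section Membership

variable {m κ : Type*} [DecidableEq κ] {P : Matrix m κ ℝ} {Idx : κ → m}

theorem apply_eq_one_of_submatrix_eq_one (hIdx : P.submatrix Idx id = 1) (k : κ) :
    P (Idx k) k = 1 := by
  simpa using congrFun (congrFun hIdx k) k

theorem one_le_sum_apply_of_submatrix_eq_one [Fintype m] (hP : ∀ i k, 0 ≤ P i k)
    (hIdx : P.submatrix Idx id = 1) (k : κ) : 1 ≤ ∑ i, P i k :=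
  (apply_eq_one_of_submatrix_eq_one hIdx k).symm.le.trans
    (Finset.single_le_sum (fun i _ => hP i k) (Finset.mem_univ _))

theorem one_le_transpose_mul_self_apply [Fintype m] (hIdx : P.submatrix Idx id = 1) (k : κ) :
    1 ≤ (Pᵀ * P) k k := by
  rw [mul_apply]
  calc (1 : ℝ) = Pᵀ k (Idx k) * P (Idx k) k := by
        rw [transpose_apply, apply_eq_one_of_submatrix_eq_one hIdx k, one_mul]
    _ ≤ ∑ i, Pᵀ k i * P i k :=
        Finset.single_le_sum (f := fun i => Pᵀ k i * P i k) (fun i _ => mul_self_nonneg (P i k))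
          (Finset.mem_univ _)

end Membership

theorem exists_transpose_mul_mul_eq_one_and_rowNormalize_submatrix_eq {n K : ℕ}
    {P : Matrix (Fin n) (Fin K) ℝ} {Idx : Fin K → Fin n} (hIdx : P.submatrix Idx id = 1)
    {d : Fin n → ℝ} (hd : ∀ i, 0 < d i) (M : Matrix (Fin K) (Fin K) ℝ)
    {V : Matrix (Fin n) (Fin K) ℝ} {e : Fin K → ℝ} (hV : Vᵀ * V = 1) (he : ∀ k, e k ≠ 0)
    (h : diagonal (fun i => (√(d i))⁻¹) * (P * M * Pᵀ) * diagonal (fun i => (√(d i))⁻¹) =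
      V * diagonal e * Vᵀ) :
    ∃ B : Matrix (Fin K) (Fin K) ℝ, Bᵀ * (Pᵀ * diagonal d⁻¹ * P) * B = 1 ∧
      (rowNormalize V).submatrix Idx id = rowNormalize B := by
  set s : Fin n → ℝ := fun i => (√(d i))⁻¹
  have hs : ∀ i, 0 < s i := fun i => inv_pos.2 (Real.sqrt_pos.2 (hd i))
  obtain ⟨B, hVB⟩ := exists_eq_mul_of_mul_mul_transpose_eq (diagonal s * P) M hV he
    (by rw [← h]; simp only [transpose_mul, diagonal_transpose, Matrix.mul_assoc])
  have hss : diagonal s * diagonal s = diagonal d⁻¹ := by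
    rw [diagonal_mul_diagonal]
    exact congrArg diagonal (funext fun i => by rw [← mul_inv, Real.mul_self_sqrt (hd i).le]; rfl)
  refine ⟨B, ?_, ?_⟩
  · rw [← hV, hVB, ← hss]
    simp only [transpose_mul, diagonal_transpose, Matrix.mul_assoc]
  · rw [rowNormalize_submatrix, hVB, submatrix_diagonal_mul_mul, hIdx, Matrix.mul_one]
    exact rowNormalize_diagonal_mul (c := s ∘ Idx) (fun k => hs (Idx k)) B

theorem sq_mul_div_le_inv_mul_div {a b p k l : ℝ} (ha : 0 < a) (hab : a ≤ b) (hp : 0 ≤ p)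
    (hkl : 0 < k * l) : a ^ 2 * p / (b ^ 2 * k * l) ≤ b⁻¹ * p / (a⁻¹ * (k * l)) := by
  have hb : 0 < b := ha.trans_le hab
  rw [mul_assoc, div_le_div_iff₀ (by positivity) (by positivity)]
  field_simp
  nlinarith [mul_le_mul_of_nonneg_left hab (mul_nonneg hp hkl.le)]

theorem div_le_inv_rowNormalize_mul_transpose_mulVec_one_of_membership {n K : ℕ}
    {P : Matrix (Fin n) (Fin K) ℝ} (hP : ∀ i k, 0 ≤ P i k) (hP1 : ∀ i, ∑ k, P i k = 1)
    {d : Fin n → ℝ} {dmin dmax : ℝ} (hdmin : 0 < dmin) (hdle : dmin ≤ dmax)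
    (hd_ge : ∀ i, dmin ≤ d i) (hd_le : ∀ i, d i ≤ dmax) {B : Matrix (Fin K) (Fin K) ℝ}
    (h : Bᵀ * (Pᵀ * diagonal d⁻¹ * P) * B = 1) {Λ p : ℝ} (hΛ : ∀ k, (Pᵀ * P) k k ≤ Λ)
    (hp : ∀ k, p ≤ ∑ i, P i k) (k : Fin K) :
    dmax⁻¹ * p / (dmin⁻¹ * Λ) ≤ ((rowNormalize B * (rowNormalize B)ᵀ)⁻¹ *ᵥ fun _ => 1) k := by
  have hd : ∀ i, 0 < d i := fun i => hdmin.trans_le (hd_ge i)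
  refine div_le_inv_rowNormalize_mul_transpose_mulVec_one h
    (transpose_mul_diagonal_mul_nonneg hP fun i => (inv_pos.2 (hd i)).le) (fun k => ?_)
    (fun k => ?_) k
  · exact (transpose_mul_diagonal_mul_diag_le (fun i => inv_anti₀ hdmin (hd_ge i)) k).trans
      (mul_le_mul_of_nonneg_left (hΛ k) (inv_nonneg.2 hdmin.le))
  · exact (mul_le_mul_of_nonneg_left (hp k) (inv_nonneg.2 (hdmin.le.trans hdle))).trans
      (le_sum_transpose_mul_diagonal_mul_apply hP hP1 (fun i => inv_anti₀ (hd i) (hd_le i)) k)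

theorem stmt_14_general
    {n K : ℕ} (hK : 0 < K)
    (Pi : Matrix (Fin n) (Fin K) ℝ)
    (hPi_nonneg : ∀ i k, 0 ≤ Pi i k)
    (hPi_rowsum : ∀ i, ∑ k, Pi i k = 1)
    (Pt : Matrix (Fin K) (Fin K) ℝ)
    (ρ τ : ℝ)
    (Om : Matrix (Fin n) (Fin n) ℝ) (hOm : Om = Pi * (ρ • Pt) * Piᵀ)
    (deg : Fin n → ℝ)
    (hpos : ∀ i, 0 < deg i + τ)
    (Ltau : Matrix (Fin n) (Fin n) ℝ)
    (hLtau : Ltau = Matrix.diagonal (fun i => (Real.sqrt (deg i + τ))⁻¹) * Om *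
      Matrix.diagonal (fun i => (Real.sqrt (deg i + τ))⁻¹))
    (Idx : Fin K → Fin n) (hIdx : Pi.submatrix Idx id = 1)
    (V : Matrix (Fin n) (Fin K) ℝ) (e : Fin K → ℝ)
    (hVorth : Vᵀ * V = 1) (he : ∀ k, e k ≠ 0)
    (hVE : Ltau = V * Matrix.diagonal e * Vᵀ)
    (Vstar1 : Matrix (Fin n) (Fin K) ℝ)
    (hVstar1 : ∀ i k, Vstar1 i k = V i k / rowNorm V i)
    (hH : (Piᵀ * Pi).IsHermitian) :
    (τ + ⨅ j, deg j) ^ 2 * (⨅ k, ∑ i, Pi i k) /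
        ((τ + ⨆ j, deg j) ^ 2 * (K : ℝ) * ⨆ k, hH.eigenvalues k) ≤
      (⨅ k, (((Vstar1.submatrix Idx id) * (Vstar1.submatrix Idx id)ᵀ)⁻¹ *ᵥ
        (fun _ => (1 : ℝ))) k) ∧
    0 < (⨅ k, (((Vstar1.submatrix Idx id) * (Vstar1.submatrix Idx id)ᵀ)⁻¹ *ᵥ
      (fun _ => (1 : ℝ))) k) := by
  have : Nonempty (Fin K) := ⟨⟨0, hK⟩⟩
  obtain ⟨B, hBGB, hN⟩ := exists_transpose_mul_mul_eq_one_and_rowNormalize_submatrix_eq hIdx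
    hpos (ρ • Pt) hVorth he (by rw [← hOm, ← hLtau, hVE])
  rw [show Vstar1 = rowNormalize V from funext₂ hVstar1, hN]
  set dmin := τ + ⨅ j, deg j
  set dmax := τ + ⨆ j, deg j
  set pim := ⨅ k, ∑ i, Pi i k
  set lam := ⨆ k, hH.eigenvalues k
  have hdmin : ∀ i, dmin ≤ deg i + τ := fun i => by linarith [Finite.ciInf_le deg i]
  have hdmax : ∀ i, deg i + τ ≤ dmax := fun i => by linarith [Finite.le_ciSup deg i]
  have hdmin0 : 0 < dmin := by
    have : Nonempty (Fin n) := ⟨Idx ⟨0, hK⟩⟩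
    obtain ⟨j, hj⟩ := exists_eq_ciInf_of_finite (f := deg)
    linarith [hpos j]
  have hdle : dmin ≤ dmax := (hdmin (Idx ⟨0, hK⟩)).trans (hdmax _)
  have hpim : 1 ≤ pim := le_ciInf (one_le_sum_apply_of_submatrix_eq_one hPi_nonneg hIdx)
  have hlam : ∀ k, (Piᵀ * Pi) k k ≤ K * lam := fun k => by
    simpa using (posSemidef_conjTranspose_mul_self Pi).diag_le_card_mul_iSup_eigenvalues k
  have hKlam : 0 < (K : ℝ) * lam :=
    one_pos.trans_le ((one_le_transpose_mul_self_apply hIdx ⟨0, hK⟩).trans (hlam _))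
  have hbound : dmin ^ 2 * pim / (dmax ^ 2 * K * lam) ≤
      ⨅ k, ((rowNormalize B * (rowNormalize B)ᵀ)⁻¹ *ᵥ fun _ => 1) k :=
    le_ciInf fun k => (sq_mul_div_le_inv_mul_div hdmin0 hdle (zero_le_one.trans hpim) hKlam).trans
      (div_le_inv_rowNormalize_mul_transpose_mulVec_one_of_membership hPi_nonneg hPi_rowsum
        hdmin0 hdle hdmin hdmax hBGB hlam (Finite.ciInf_le _) k)
  refine ⟨hbound, lt_of_lt_of_le ?_ hbound⟩
  rw [mul_assoc _ _ lam]
  exact div_pos (mul_pos (pow_pos hdmin0 2) (one_pos.trans_le hpim))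
    (mul_pos (pow_pos (hdmin0.trans_le hdle) 2) hKlam)

/-- from the proof of Lemma 5.6: with
`η = min_k ((V_{*,1}(𝓘,:)V_{*,1}(𝓘,:)')⁻¹𝟏)(k)` and `π_min = min_k Σ_i Π(i,k)`,
`η ≥ (τ+δ_min)² π_min / ((τ+δ_max)² K λ₁(Π'Π))`, so in particular `η > 0`. -/
theorem stmt_14
    {n K : ℕ} (hn : 0 < n) (hK : 0 < K) (hKn : K ≤ n)
    (Pi : Matrix (Fin n) (Fin K) ℝ)
    (hPi_nonneg : ∀ i k, 0 ≤ Pi i k)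
    (hPi_rowsum : ∀ i, ∑ k, Pi i k = 1)
    (hPi_rank : Pi.rank = K)
    (hpure : ∀ k : Fin K, ∃ i : Fin n, ∀ l, Pi i l = if l = k then 1 else 0)
    (Pt : Matrix (Fin K) (Fin K) ℝ)
    (hPt_symm : Pt.IsSymm)
    (hPt_nonneg : ∀ k l, 0 ≤ Pt k l)
    (hPt_rank : Pt.rank = K)
    (hPt_le_one : ∀ k l, Pt k l ≤ 1)
    (hPt_max : ∃ k l, Pt k l = 1)
    (ρ τ : ℝ) (hρ0 : 0 < ρ) (hρ1 : ρ ≤ 1) (hτ : 0 ≤ τ)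
    (Om : Matrix (Fin n) (Fin n) ℝ) (hOm : Om = Pi * (ρ • Pt) * Piᵀ)
    (deg : Fin n → ℝ) (hdeg : ∀ i, deg i = ∑ j, Om i j)
    (hpos : ∀ i, 0 < deg i + τ)
    (Ltau : Matrix (Fin n) (Fin n) ℝ)
    (hLtau : Ltau = Matrix.diagonal (fun i => (Real.sqrt (deg i + τ))⁻¹) * Om *
      Matrix.diagonal (fun i => (Real.sqrt (deg i + τ))⁻¹))
    (Idx : Fin K → Fin n) (hIdx : Pi.submatrix Idx id = 1)
    (V : Matrix (Fin n) (Fin K) ℝ) (e : Fin K → ℝ)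
    (hVorth : Vᵀ * V = 1) (he : ∀ k, e k ≠ 0)
    (hVE : Ltau = V * Matrix.diagonal e * Vᵀ)
    (hVrow : ∀ i, V i ≠ 0)
    (Vstar1 : Matrix (Fin n) (Fin K) ℝ)
    (hVstar1 : ∀ i k, Vstar1 i k = V i k / rowNorm V i)
    (hVstar1unit : IsUnit (Vstar1.submatrix Idx id))
    (hH : (Piᵀ * Pi).IsHermitian) :
    (τ + ⨅ j, deg j) ^ 2 * (⨅ k, ∑ i, Pi i k) /
        ((τ + ⨆ j, deg j) ^ 2 * (K : ℝ) * ⨆ k, hH.eigenvalues k) ≤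
      (⨅ k, (((Vstar1.submatrix Idx id) * (Vstar1.submatrix Idx id)ᵀ)⁻¹ *ᵥ
        (fun _ => (1 : ℝ))) k) ∧
    0 < (⨅ k, (((Vstar1.submatrix Idx id) * (Vstar1.submatrix Idx id)ᵀ)⁻¹ *ᵥ
      (fun _ => (1 : ℝ))) k) :=
  stmt_14_general hK Pi hPi_nonneg hPi_rowsum Pt ρ τ Om hOm deg hpos Ltau hLtau Idx hIdx V e hVorth
    he hVE Vstar1 hVstar1 hH
end

section
/- Let A be a symmetric n×n real matrix with nonnegative entries, let D be the diagonal matrix of its row sums with D(i,i) > 0 for all i, let τ ≥ 0, D_τ = D + τI and L_τ = D_τ^{-1/2} A D_τ^{-1/2}, and let 𝒟_τ be any n×n positive definite diagonal matrix. Then ‖L_τ‖ ≤ 1 (spectral norm), and ‖D_τ^{-1/2} A D_τ^{-1/2} − 𝒟_τ^{-1/2} A 𝒟_τ^{-1/2}‖ ≤ 2‖I − D_τ^{1/2}𝒟_τ^{-1/2}‖ + ‖I − D_τ^{1/2}𝒟_τ^{-1/2}‖². -/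
/-!
For `‖L_τ‖ ≤ 1` we use a Schur test: Cauchy–Schwarz with the weights `A i j ≥ 0` gives
`(yᵀ L_τ x)² ≤ (∑ i, D_i/(D_i+τ) y_i²) (∑ j, D_j/(D_j+τ) x_j²) ≤ ‖x‖² ‖y‖²`,
where symmetry of `A` makes the column sums equal to the row sums `D_j`.

For the perturbation bound put `B = I − E`, `E = D_τ^{1/2} 𝒟_τ^{-1/2}`. Then
`𝒟_τ^{-1/2} A 𝒟_τ^{-1/2} = E L_τ E = (I − B) L_τ (I − B)`, so the difference is
`B L_τ + L_τ B − B L_τ B`, of norm at most `2‖B‖ + ‖B‖²` since `‖L_τ‖ ≤ 1`.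
-/

open Matrix BigOperators

/-- Spectral (operator ℓ₂) norm of a square real matrix. -/
noncomputable def specNorm {m : ℕ} (A : Matrix (Fin m) (Fin m) ℝ) : ℝ :=
  ‖Matrix.toEuclideanCLM (𝕜 := ℝ) A‖

theorem sq_sum_sum_mul_mul_le {ι : Type*} [Fintype ι] (A : Matrix ι ι ℝ)
    (hA : ∀ i j, 0 ≤ A i j) (a b : ι → ℝ) :
    (∑ i, ∑ j, A i j * a i * b j) ^ 2 ≤
      (∑ i, (∑ j, A i j) * a i ^ 2) * ∑ j, (∑ i, A i j) * b j ^ 2 := by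
  have hrow : ∑ i, (∑ j, A i j) * a i ^ 2 = ∑ p : ι × ι, A p.1 p.2 * a p.1 ^ 2 := by
    simp only [Fintype.sum_prod_type, Finset.sum_mul]
  have hcol : ∑ j, (∑ i, A i j) * b j ^ 2 = ∑ p : ι × ι, A p.1 p.2 * b p.2 ^ 2 := by
    rw [Fintype.sum_prod_type_right]
    simp only [Finset.sum_mul]
  rw [hrow, hcol, ← Fintype.sum_prod_type']
  exact Finset.sum_sq_le_sum_mul_sum_of_sq_le_mul _
    (fun p _ => mul_nonneg (hA _ _) (sq_nonneg _)) (fun p _ => mul_nonneg (hA _ _) (sq_nonneg _))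
    fun p _ => le_of_eq (by ring)

theorem sum_mul_mul_sq_le_norm_sq {ι : Type*} [Fintype ι] (s w : ι → ℝ)
    (z : EuclideanSpace ℝ ι) (hws : ∀ i, w i ^ 2 * s i ≤ 1) :
    ∑ i, s i * (w i * z i) ^ 2 ≤ ‖z‖ ^ 2 := by
  rw [EuclideanSpace.real_norm_sq_eq]
  gcongr with i
  nlinarith [hws i, sq_nonneg (z i)]

theorem specNorm_diagonal_mul_mul_diagonal_le_one {n : ℕ} (A : Matrix (Fin n) (Fin n) ℝ)
    (hA : ∀ i j, 0 ≤ A i j) (u v : Fin n → ℝ) (hu : ∀ i, u i ^ 2 * ∑ j, A i j ≤ 1)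
    (hv : ∀ j, v j ^ 2 * ∑ i, A i j ≤ 1) :
    specNorm (diagonal u * A * diagonal v) ≤ 1 := by
  refine ContinuousLinearMap.opNorm_le_of_re_inner_le zero_le_one fun x y hx hy => ?_
  have hform : inner ℝ (toEuclideanCLM (𝕜 := ℝ) (diagonal u * A * diagonal v) x) y =
      ∑ i, ∑ j, A i j * (u i * y i) * (v j * x j) := by
    rw [real_inner_comm, inner_toEuclideanCLM]
    simp only [dotProduct, mulVec, Matrix.mul_diagonal, Matrix.diagonal_mul, Finset.mul_sum]
    exact Finset.sum_congr rfl fun i _ => Finset.sum_congr rfl fun j _ => by ring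
  rw [RCLike.re_to_real, hform]
  have hrow := sum_mul_mul_sq_le_norm_sq (fun i => ∑ j, A i j) u y hu
  have hcol := sum_mul_mul_sq_le_norm_sq (fun j => ∑ i, A i j) v x hv
  rw [hy, one_pow] at hrow
  rw [hx, one_pow] at hcol
  have hsq := sq_sum_sum_mul_mul_le A hA (fun i => u i * y i) (fun j => v j * x j)
  have hcol0 : 0 ≤ ∑ j, (∑ i, A i j) * (v j * x j) ^ 2 :=
    Finset.sum_nonneg fun j _ => mul_nonneg (Finset.sum_nonneg fun i _ => hA i j) (sq_nonneg _)
  refine (le_abs_self _).trans ((sq_le_one_iff_abs_le_one _).mp ?_)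
  exact hsq.trans (mul_le_one₀ hrow hcol0 hcol)

theorem norm_sub_one_sub_mul_mul_one_sub_le {R : Type*} [SeminormedRing R] {a : R}
    (ha : ‖a‖ ≤ 1) (b : R) : ‖a - (1 - b) * a * (1 - b)‖ ≤ 2 * ‖b‖ + ‖b‖ ^ 2 := by
  have hb := norm_nonneg b
  calc ‖a - (1 - b) * a * (1 - b)‖ = ‖b * a + a * b - b * a * b‖ := by congr 1; noncomm_ring
    _ ≤ ‖b‖ * ‖a‖ + ‖a‖ * ‖b‖ + ‖b‖ * ‖a‖ * ‖b‖ := by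
        refine (norm_sub_le _ _).trans (add_le_add ((norm_add_le _ _).trans
          (add_le_add (norm_mul_le _ _) (norm_mul_le _ _))) ((norm_mul_le _ _).trans ?_))
        exact mul_le_mul_of_nonneg_right (norm_mul_le _ _) hb
    _ ≤ 2 * ‖b‖ + ‖b‖ ^ 2 := by nlinarith [norm_nonneg a]

theorem stmt_15_general
    {n : ℕ} (A : Matrix (Fin n) (Fin n) ℝ)
    (hA_symm : A.IsSymm) (hA_nonneg : ∀ i j, 0 ≤ A i j)
    (Drow : Fin n → ℝ) (hDrow : ∀ i, Drow i = ∑ j, A i j) (hDpos : ∀ i, 0 < Drow i)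
    (τ : ℝ) (hτ : 0 ≤ τ)
    (Ltau : Matrix (Fin n) (Fin n) ℝ)
    (hLtau : Ltau = Matrix.diagonal (fun i => (Real.sqrt (Drow i + τ))⁻¹) * A *
      Matrix.diagonal (fun i => (Real.sqrt (Drow i + τ))⁻¹))
    (d : Fin n → ℝ)
    (E : Matrix (Fin n) (Fin n) ℝ)
    (hE : E = Matrix.diagonal (fun i => Real.sqrt (Drow i + τ) * (Real.sqrt (d i))⁻¹)) :
    specNorm Ltau ≤ 1 ∧
    specNorm (Ltau - Matrix.diagonal (fun i => (Real.sqrt (d i))⁻¹) * A *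
        Matrix.diagonal (fun i => (Real.sqrt (d i))⁻¹)) ≤
      2 * specNorm (1 - E) + specNorm (1 - E) ^ 2 := by
  have hpos : ∀ i, 0 < Drow i + τ := fun i => by linarith [hDpos i]
  have hweight_row : ∀ i, (Real.sqrt (Drow i + τ))⁻¹ ^ 2 * ∑ j, A i j ≤ 1 := fun i => by
    rw [inv_pow, Real.sq_sqrt (hpos i).le, ← hDrow i, inv_mul_le_one₀ (hpos i)]
    linarith
  have hweight_col : ∀ j, (Real.sqrt (Drow j + τ))⁻¹ ^ 2 * ∑ i, A i j ≤ 1 := fun j => by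
    simpa only [fun i => hA_symm.apply j i] using hweight_row j
  have hL : specNorm Ltau ≤ 1 := hLtau ▸
    specNorm_diagonal_mul_mul_diagonal_le_one A hA_nonneg _ _ hweight_row hweight_col
  have hconj : E * Ltau * E = Matrix.diagonal (fun i => (Real.sqrt (d i))⁻¹) * A *
      Matrix.diagonal (fun i => (Real.sqrt (d i))⁻¹) := by
    have hcancel : ∀ i, Real.sqrt (Drow i + τ) * (Real.sqrt (Drow i + τ))⁻¹ = 1 := fun i =>
      mul_inv_cancel₀ (Real.sqrt_pos.mpr (hpos i)).ne'
    rw [hLtau, hE]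
    simp only [← Matrix.mul_assoc, diagonal_mul_diagonal]
    rw [Matrix.mul_assoc _ (diagonal _) (diagonal _), diagonal_mul_diagonal]
    congr <;> funext i <;> linear_combination (Real.sqrt (d i))⁻¹ * hcancel i
  refine ⟨hL, ?_⟩
  rw [← hconj]
  unfold specNorm
  simpa only [map_sub, map_mul, map_one, sub_sub_cancel] using
    norm_sub_one_sub_mul_mul_one_sub_le hL (toEuclideanCLM (𝕜 := ℝ) (1 - E))

/-- for a symmetric nonnegative matrix `A` with positive row sums `D`, a
regularizer `τ ≥ 0`, `D_τ = D + τI`, `L_τ = D_τ^{-1/2} A D_τ^{-1/2}`, and any positive definite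
diagonal matrix `𝒟_τ`, one has `‖L_τ‖ ≤ 1` and
`‖D_τ^{-1/2} A D_τ^{-1/2} − 𝒟_τ^{-1/2} A 𝒟_τ^{-1/2}‖ ≤ 2‖I − D_τ^{1/2}𝒟_τ^{-1/2}‖
  + ‖I − D_τ^{1/2}𝒟_τ^{-1/2}‖²`. -/
theorem stmt_15
    {n : ℕ} (A : Matrix (Fin n) (Fin n) ℝ)
    (hA_symm : A.IsSymm) (hA_nonneg : ∀ i j, 0 ≤ A i j)
    (Drow : Fin n → ℝ) (hDrow : ∀ i, Drow i = ∑ j, A i j) (hDpos : ∀ i, 0 < Drow i)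
    (τ : ℝ) (hτ : 0 ≤ τ)
    (Ltau : Matrix (Fin n) (Fin n) ℝ)
    (hLtau : Ltau = Matrix.diagonal (fun i => (Real.sqrt (Drow i + τ))⁻¹) * A *
      Matrix.diagonal (fun i => (Real.sqrt (Drow i + τ))⁻¹))
    (d : Fin n → ℝ) (hd : ∀ i, 0 < d i)
    (E : Matrix (Fin n) (Fin n) ℝ)
    (hE : E = Matrix.diagonal (fun i => Real.sqrt (Drow i + τ) * (Real.sqrt (d i))⁻¹)) :
    specNorm Ltau ≤ 1 ∧
    specNorm (Ltau - Matrix.diagonal (fun i => (Real.sqrt (d i))⁻¹) * A *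
        Matrix.diagonal (fun i => (Real.sqrt (d i))⁻¹)) ≤
      2 * specNorm (1 - E) + specNorm (1 - E) ^ 2 :=
  stmt_15_general A hA_symm hA_nonneg Drow hDrow hDpos τ hτ Ltau hLtau d E hE
end

section
/- Under the MMSB setup, for every node i (1 ≤ i ≤ n), √(λ_K(Π'Π)/(τ+δ_max)) ≤ 𝒟_τ^{-1/2}(i,i)/‖V(i,:)‖ ≤ √(K λ_1(Π'Π)/(τ+δ_min)). -/
/-
Write `S = 𝒟_τ^{-1/2}` and `π_i = Π(i,:)`. The eigen-equation `S Π P Π' S V = V E` gives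
`V = S Π B` with `B = P Π' S V E⁻¹`, and `V'V = I` becomes `B' G B = I` for `G = Π' S² Π`.
So `S(i,i) / ‖V(i,:)‖ = 1 / ‖B' π_i‖`, and `‖B' π_i‖² = π_i' G⁻¹ π_i`. Since
`Π'Π / (τ + δ_max) ≤ G ≤ Π'Π / (τ + δ_min)`, the Rayleigh bounds for `Π'Π` together with
`1/K ≤ ‖π_i‖² ≤ 1` for the probability vector `π_i` give both inequalities.
-/

open Matrix BigOperators

section Spectral

open scoped ComplexOrder

variable {n 𝕜 : Type*} [Fintype n] [DecidableEq n] [RCLike 𝕜] {A : Matrix n n 𝕜}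

lemma Matrix.IsHermitian.sub_smul_one_eq (hA : A.IsHermitian) (c : ℝ) :
    A - (c : 𝕜) • 1 = Unitary.conjStarAlgAut 𝕜 _ hA.eigenvectorUnitary
      (diagonal (RCLike.ofReal ∘ (hA.eigenvalues - fun _ => c))) := by
  conv_lhs => rw [hA.spectral_theorem]
  rw [← map_one (Unitary.conjStarAlgAut 𝕜 _ hA.eigenvectorUnitary), ← map_smul, ← map_sub,
    ← diagonal_one, ← diagonal_smul, diagonal_sub]
  congr 2
  ext i
  simp

lemma Matrix.IsHermitian.posSemidef_sub_smul_one (hA : A.IsHermitian) {c : ℝ}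
    (hc : ∀ i, c ≤ hA.eigenvalues i) : (A - (c : 𝕜) • 1).PosSemidef := by
  rw [hA.sub_smul_one_eq, Unitary.conjStarAlgAut_apply,
    Unitary.isUnit_coe.posSemidef_star_right_conjugate_iff]
  simpa [posSemidef_diagonal_iff] using hc

lemma Matrix.IsHermitian.posSemidef_smul_one_sub (hA : A.IsHermitian) {c : ℝ}
    (hc : ∀ i, hA.eigenvalues i ≤ c) : ((c : 𝕜) • 1 - A).PosSemidef := by
  rw [← neg_sub, hA.sub_smul_one_eq, ← map_neg, Unitary.conjStarAlgAut_apply,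
    Unitary.isUnit_coe.posSemidef_star_right_conjugate_iff, diagonal_neg]
  simpa [posSemidef_diagonal_iff] using hc

end Spectral

section QuadraticForms

variable {m n : Type*} [Fintype m] [Fintype n]

lemma dotProduct_self_nonneg (v : n → ℝ) : 0 ≤ v ⬝ᵥ v :=
  Fintype.sum_nonneg fun i => mul_self_nonneg (v i)

lemma dotProduct_sq_le (v w : n → ℝ) : (v ⬝ᵥ w) ^ 2 ≤ (v ⬝ᵥ v) * (w ⬝ᵥ w) := by
  simpa only [dotProduct, sq] using Finset.sum_mul_sq_le_sq_mul_sq Finset.univ v w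

lemma dotProduct_transpose_mul_mul_mulVec (A : Matrix m n ℝ) (C : Matrix m m ℝ) (y : n → ℝ) :
    y ⬝ᵥ ((Aᵀ * C * A) *ᵥ y) = (A *ᵥ y) ⬝ᵥ (C *ᵥ (A *ᵥ y)) := by
  rw [← mulVec_mulVec, ← mulVec_mulVec, dotProduct_mulVec, vecMul_transpose]

lemma dotProduct_transpose_mul_self_mulVec (A : Matrix m n ℝ) (y : n → ℝ) :
    y ⬝ᵥ ((Aᵀ * A) *ᵥ y) = (A *ᵥ y) ⬝ᵥ (A *ᵥ y) := by
  rw [← mulVec_mulVec, dotProduct_mulVec, vecMul_transpose]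

lemma Matrix.IsHermitian.iInf_eigenvalues_mul_dotProduct_self_le [DecidableEq n]
    {A : Matrix n n ℝ} (hA : A.IsHermitian) (y : n → ℝ) :
    (⨅ i, hA.eigenvalues i) * (y ⬝ᵥ y) ≤ y ⬝ᵥ (A *ᵥ y) := by
  have h := (hA.posSemidef_sub_smul_one
    fun i => ciInf_le (Set.finite_range hA.eigenvalues).bddBelow i).dotProduct_mulVec_nonneg y
  simp only [star_trivial, sub_mulVec, smul_mulVec, one_mulVec, dotProduct_sub,
    dotProduct_smul, RCLike.ofReal_real_eq_id, id, smul_eq_mul] at h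
  linarith

lemma Matrix.IsHermitian.dotProduct_mulVec_le_iSup_eigenvalues_mul [DecidableEq n]
    {A : Matrix n n ℝ} (hA : A.IsHermitian) (y : n → ℝ) :
    y ⬝ᵥ (A *ᵥ y) ≤ (⨆ i, hA.eigenvalues i) * (y ⬝ᵥ y) := by
  have h := (hA.posSemidef_smul_one_sub
    fun i => le_ciSup (Set.finite_range hA.eigenvalues).bddAbove i).dotProduct_mulVec_nonneg y
  simp only [star_trivial, sub_mulVec, smul_mulVec, one_mulVec, dotProduct_sub,
    dotProduct_smul, RCLike.ofReal_real_eq_id, id, smul_eq_mul] at h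
  linarith

lemma le_dotProduct_diagonal_mulVec [DecidableEq n] {c : n → ℝ} {a : ℝ} (hc : ∀ j, a ≤ c j)
    (v : n → ℝ) : a * (v ⬝ᵥ v) ≤ v ⬝ᵥ (diagonal c *ᵥ v) := by
  simp only [dotProduct, mulVec_diagonal, Finset.mul_sum]
  exact Finset.sum_le_sum fun j _ => by nlinarith [hc j, mul_self_nonneg (v j)]

lemma dotProduct_diagonal_mulVec_le [DecidableEq n] {c : n → ℝ} {b : ℝ} (hc : ∀ j, c j ≤ b)
    (v : n → ℝ) : v ⬝ᵥ (diagonal c *ᵥ v) ≤ b * (v ⬝ᵥ v) := by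
  simp only [dotProduct, mulVec_diagonal, Finset.mul_sum]
  exact Finset.sum_le_sum fun j _ => by nlinarith [hc j, mul_self_nonneg (v j)]

lemma le_dotProduct_transpose_mul_diagonal_mul_mulVec [DecidableEq m] [DecidableEq n]
    {A : Matrix n m ℝ} (hA : (Aᵀ * A).IsHermitian) {c : n → ℝ} {a : ℝ} (ha : 0 ≤ a)
    (hc : ∀ j, a ≤ c j) (y : m → ℝ) :
    a * (⨅ k, hA.eigenvalues k) * (y ⬝ᵥ y) ≤ y ⬝ᵥ ((Aᵀ * diagonal c * A) *ᵥ y) := by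
  rw [dotProduct_transpose_mul_mul_mulVec, mul_assoc]
  calc a * ((⨅ k, hA.eigenvalues k) * (y ⬝ᵥ y)) ≤ a * ((A *ᵥ y) ⬝ᵥ (A *ᵥ y)) := by
        rw [← dotProduct_transpose_mul_self_mulVec]
        gcongr
        exact hA.iInf_eigenvalues_mul_dotProduct_self_le y
    _ ≤ (A *ᵥ y) ⬝ᵥ (diagonal c *ᵥ (A *ᵥ y)) := le_dotProduct_diagonal_mulVec hc _

lemma dotProduct_transpose_mul_diagonal_mul_mulVec_le [DecidableEq m] [DecidableEq n]
    {A : Matrix n m ℝ} (hA : (Aᵀ * A).IsHermitian) {c : n → ℝ} {b : ℝ} (hb : 0 ≤ b)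
    (hc : ∀ j, c j ≤ b) (y : m → ℝ) :
    y ⬝ᵥ ((Aᵀ * diagonal c * A) *ᵥ y) ≤ b * (⨆ k, hA.eigenvalues k) * (y ⬝ᵥ y) := by
  rw [dotProduct_transpose_mul_mul_mulVec, mul_assoc]
  calc (A *ᵥ y) ⬝ᵥ (diagonal c *ᵥ (A *ᵥ y)) ≤ b * ((A *ᵥ y) ⬝ᵥ (A *ᵥ y)) :=
        dotProduct_diagonal_mulVec_le hc _
    _ ≤ b * ((⨆ k, hA.eigenvalues k) * (y ⬝ᵥ y)) := by
        rw [← dotProduct_transpose_mul_self_mulVec]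
        gcongr
        exact hA.dotProduct_mulVec_le_iSup_eigenvalues_mul y

end QuadraticForms

section InverseGram

/- `Bᵀ G B = 1` means `B Bᵀ = G⁻¹`. Instead of inverting `G`, both bounds apply Cauchy–Schwarz,
against `B (x ᵥ* B)` and against `B⁻¹ x = Bᵀ G x` respectively. -/

variable {n : Type*} [Fintype n] [DecidableEq n] {B G : Matrix n n ℝ}

lemma mul_dotProduct_vecMul_le_of_transpose_mul_mul_eq_one (hB : Bᵀ * G * B = 1) {μ : ℝ}
    (hG : ∀ y, μ * (y ⬝ᵥ y) ≤ y ⬝ᵥ (G *ᵥ y)) (x : n → ℝ) :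
    μ * ((x ᵥ* B) ⬝ᵥ (x ᵥ* B)) ≤ x ⬝ᵥ x := by
  set w := x ᵥ* B
  have hW : w ⬝ᵥ w = x ⬝ᵥ (B *ᵥ w) := (dotProduct_mulVec x B w).symm
  have hu : μ * ((B *ᵥ w) ⬝ᵥ (B *ᵥ w)) ≤ w ⬝ᵥ w := by
    simpa only [← dotProduct_transpose_mul_mul_mulVec, hB, one_mulVec] using hG (B *ᵥ w)
  rcases le_or_gt μ 0 with hμ | hμ
  · exact (mul_nonpos_of_nonpos_of_nonneg hμ (dotProduct_self_nonneg w)).trans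
      (dotProduct_self_nonneg x)
  have hWW : μ * (w ⬝ᵥ w) * (w ⬝ᵥ w) ≤ (x ⬝ᵥ x) * (w ⬝ᵥ w) :=
    calc μ * (w ⬝ᵥ w) * (w ⬝ᵥ w) = μ * (x ⬝ᵥ (B *ᵥ w)) ^ 2 := by rw [← hW]; ring
      _ ≤ μ * ((x ⬝ᵥ x) * ((B *ᵥ w) ⬝ᵥ (B *ᵥ w))) := by gcongr; exact dotProduct_sq_le _ _
      _ = (x ⬝ᵥ x) * (μ * ((B *ᵥ w) ⬝ᵥ (B *ᵥ w))) := by ring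
      _ ≤ (x ⬝ᵥ x) * (w ⬝ᵥ w) := by gcongr; exact dotProduct_self_nonneg x
  rcases (dotProduct_self_nonneg w).eq_or_lt with hw | hw
  · rw [← hw, mul_zero]; exact dotProduct_self_nonneg x
  · exact le_of_mul_le_mul_right hWW hw

lemma dotProduct_self_le_mul_dotProduct_vecMul_of_transpose_mul_mul_eq_one
    (hB : Bᵀ * G * B = 1) {ν : ℝ} (hG : ∀ y, y ⬝ᵥ (G *ᵥ y) ≤ ν * (y ⬝ᵥ y)) (x : n → ℝ) :
    x ⬝ᵥ x ≤ ν * ((x ᵥ* B) ⬝ᵥ (x ᵥ* B)) := by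
  set z := (Bᵀ * G) *ᵥ x
  have hBz : B *ᵥ z = x := by rw [mulVec_mulVec, mul_eq_one_comm.1 hB, one_mulVec]
  have hX : x ⬝ᵥ x = (x ᵥ* B) ⬝ᵥ z := by
    calc x ⬝ᵥ x = x ⬝ᵥ (B *ᵥ z) := by rw [hBz]
      _ = (x ᵥ* B) ⬝ᵥ z := dotProduct_mulVec x B z
  have hz : z ⬝ᵥ z ≤ ν * (x ⬝ᵥ x) := by
    simpa only [← hBz, ← dotProduct_transpose_mul_mul_mulVec, hB, one_mulVec] using hG (B *ᵥ z)
  rcases (dotProduct_self_nonneg x).eq_or_lt with hx | hx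
  · rw [← hx, dotProduct_self_eq_zero.1 hx.symm, zero_vecMul, dotProduct_zero, mul_zero]
  have hXX : (x ⬝ᵥ x) * (x ⬝ᵥ x) ≤ ν * ((x ᵥ* B) ⬝ᵥ (x ᵥ* B)) * (x ⬝ᵥ x) :=
    calc (x ⬝ᵥ x) * (x ⬝ᵥ x) = ((x ᵥ* B) ⬝ᵥ z) ^ 2 := by rw [← hX]; ring
      _ ≤ ((x ᵥ* B) ⬝ᵥ (x ᵥ* B)) * (z ⬝ᵥ z) := dotProduct_sq_le _ _
      _ ≤ ((x ᵥ* B) ⬝ᵥ (x ᵥ* B)) * (ν * (x ⬝ᵥ x)) := by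
          gcongr; exact dotProduct_self_nonneg _
      _ = ν * ((x ᵥ* B) ⬝ᵥ (x ᵥ* B)) * (x ⬝ᵥ x) := by ring
  exact le_of_mul_le_mul_right hXX hx

end InverseGram

lemma dotProduct_self_le_one_of_stochastic {n : Type*} [Fintype n] {x : n → ℝ}
    (hx0 : ∀ k, 0 ≤ x k) (hx1 : ∑ k, x k = 1) : x ⬝ᵥ x ≤ 1 := by
  rw [← hx1]
  refine Finset.sum_le_sum fun k _ => mul_le_of_le_one_left (hx0 k) ?_
  rw [← hx1]
  exact Finset.single_le_sum (fun l _ => hx0 l) (Finset.mem_univ k)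

lemma one_le_card_mul_dotProduct_self_of_sum_eq_one {n : Type*} [Fintype n] {x : n → ℝ}
    (hx1 : ∑ k, x k = 1) : 1 ≤ Fintype.card n * (x ⬝ᵥ x) := by
  simpa [hx1, dotProduct, sq] using sq_sum_le_card_mul_sum_sq (s := Finset.univ) (f := x)

section Degrees

variable {ι : Type*} [Finite ι] {d : ι → ℝ} {τ : ℝ}

lemma add_iSup_pos (hpos : ∀ j, 0 < d j + τ) (j : ι) : 0 < τ + ⨆ i, d i := by
  linarith [hpos j, le_ciSup (Set.finite_range d).bddAbove j]

lemma add_iInf_pos [Nonempty ι] (hpos : ∀ j, 0 < d j + τ) : 0 < τ + ⨅ i, d i := by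
  obtain ⟨j, hj⟩ := exists_eq_ciInf_of_finite (f := d)
  linarith [hpos j]

lemma inv_add_iSup_le (hpos : ∀ j, 0 < d j + τ) (j : ι) : (τ + ⨆ i, d i)⁻¹ ≤ (d j + τ)⁻¹ :=
  inv_anti₀ (hpos j) (by linarith [le_ciSup (Set.finite_range d).bddAbove j])

lemma inv_le_inv_add_iInf (hpos : ∀ j, 0 < d j + τ) (j : ι) : (d j + τ)⁻¹ ≤ (τ + ⨅ i, d i)⁻¹ :=
  have : Nonempty ι := ⟨j⟩
  inv_anti₀ (add_iInf_pos hpos) (by linarith [ciInf_le (Set.finite_range d).bddBelow j])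

end Degrees

lemma eq_mul_of_eigendecomposition {m n k : Type*} [Fintype m] [Fintype n] [Fintype k]
    [DecidableEq k] {S : Matrix n n ℝ} {A : Matrix n m ℝ} {P : Matrix m m ℝ} {V : Matrix n k ℝ}
    {e : k → ℝ} (hV : Vᵀ * V = 1) (he : ∀ j, e j ≠ 0)
    (h : S * (A * P * Aᵀ) * S = V * diagonal e * Vᵀ) :
    V = S * A * (P * Aᵀ * S * V * diagonal e⁻¹) := by
  have he' : diagonal e * diagonal e⁻¹ = 1 := by
    rw [diagonal_mul_diagonal, ← diagonal_one]
    exact congrArg diagonal (funext fun j => mul_inv_cancel₀ (he j))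
  calc V = V * diagonal e * (Vᵀ * V) * diagonal e⁻¹ := by
        rw [hV, Matrix.mul_one, Matrix.mul_assoc, he', Matrix.mul_one]
    _ = S * (A * P * Aᵀ) * S * V * diagonal e⁻¹ := by rw [h]; simp only [Matrix.mul_assoc]
    _ = S * A * (P * Aᵀ * S * V * diagonal e⁻¹) := by simp only [Matrix.mul_assoc]

lemma transpose_mul_mul_eq_one_of_eq_diagonal_mul_mul {m n k : Type*} [Fintype m] [Fintype n]
    [DecidableEq n] [DecidableEq k] {s : n → ℝ} {A : Matrix n m ℝ} {B : Matrix m k ℝ}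
    {V : Matrix n k ℝ} (hV : V = diagonal s * A * B) (hVV : Vᵀ * V = 1) :
    Bᵀ * (Aᵀ * diagonal (s * s) * A) * B = 1 := by
  have hss : diagonal (s * s) = (diagonal s)ᵀ * diagonal s := by
    rw [diagonal_transpose, diagonal_mul_diagonal]
    rfl
  rw [← hVV, hV, hss]
  simp only [transpose_mul, Matrix.mul_assoc]

lemma diagonal_mul_mul_apply {m n k : Type*} [Fintype m] [Fintype n] [DecidableEq n]
    (s : n → ℝ) (A : Matrix n m ℝ) (B : Matrix m k ℝ) (i : n) :
    (diagonal s * A * B) i = s i • (A i ᵥ* B) := by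
  ext j
  rw [Matrix.mul_assoc, diagonal_mul]
  rfl

lemma div_rowNorm_eq_of_row_eq_smul {a b : ℕ} {M : Matrix (Fin a) (Fin b) ℝ} {i : Fin a} {s : ℝ}
    {w : Fin b → ℝ} (hs : 0 < s) (hM : M i = s • w) :
    s / rowNorm M i = (Real.sqrt (w ⬝ᵥ w))⁻¹ := by
  have h : ∑ j, M i j ^ 2 = s ^ 2 * (w ⬝ᵥ w) := by
    simp only [hM, Pi.smul_apply, smul_eq_mul, dotProduct, Finset.mul_sum]
    exact Finset.sum_congr rfl fun j _ => by ring
  rw [rowNorm, h, Real.sqrt_mul (sq_nonneg s), Real.sqrt_sq hs.le, div_mul_eq_div_div,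
    div_self hs.ne', one_div]

lemma sqrt_le_inv_sqrt_and_inv_sqrt_le_sqrt {μ ν W : ℝ} (hW : 0 ≤ W) (hμ : μ * W ≤ 1)
    (hν : 1 ≤ ν * W) : Real.sqrt μ ≤ (Real.sqrt W)⁻¹ ∧ (Real.sqrt W)⁻¹ ≤ Real.sqrt ν := by
  have hWpos : 0 < W := hW.lt_of_ne <| by
    rintro rfl
    norm_num at hν
  rw [← Real.sqrt_inv, ← one_div]
  exact ⟨Real.sqrt_le_sqrt ((le_div_iff₀ hWpos).2 hμ),
    Real.sqrt_le_sqrt ((div_le_iff₀ hWpos).2 hν)⟩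

theorem stmt_19_general
    {n K : ℕ}
    (Pi : Matrix (Fin n) (Fin K) ℝ)
    (hPi_nonneg : ∀ i k, 0 ≤ Pi i k)
    (hPi_rowsum : ∀ i, ∑ k, Pi i k = 1)
    (Pt : Matrix (Fin K) (Fin K) ℝ)
    (ρ τ : ℝ)
    (Om : Matrix (Fin n) (Fin n) ℝ) (hOm : Om = Pi * (ρ • Pt) * Piᵀ)
    (deg : Fin n → ℝ)
    (hpos : ∀ i, 0 < deg i + τ)
    (Ltau : Matrix (Fin n) (Fin n) ℝ)
    (hLtau : Ltau = Matrix.diagonal (fun i => (Real.sqrt (deg i + τ))⁻¹) * Om *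
      Matrix.diagonal (fun i => (Real.sqrt (deg i + τ))⁻¹))
    (V : Matrix (Fin n) (Fin K) ℝ) (e : Fin K → ℝ)
    (hVorth : Vᵀ * V = 1) (he : ∀ k, e k ≠ 0)
    (hVE : Ltau = V * Matrix.diagonal e * Vᵀ)
    (hH : (Piᵀ * Pi).IsHermitian) :
    ∀ i : Fin n,
      Real.sqrt ((⨅ k, hH.eigenvalues k) / (τ + ⨆ j, deg j)) ≤
        (Real.sqrt (deg i + τ))⁻¹ / rowNorm V i ∧
      (Real.sqrt (deg i + τ))⁻¹ / rowNorm V i ≤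
        Real.sqrt ((K : ℝ) * (⨆ k, hH.eigenvalues k) / (τ + ⨅ j, deg j)) := by
  intro i
  have : Nonempty (Fin n) := ⟨i⟩
  set s : Fin n → ℝ := fun j => (Real.sqrt (deg j + τ))⁻¹
  set B := ρ • Pt * Piᵀ * diagonal s * V * diagonal e⁻¹
  have hV : V = diagonal s * Pi * B :=
    eq_mul_of_eigendecomposition hVorth he (by rw [← hOm, ← hLtau, hVE])
  have hss : s * s = fun j => (deg j + τ)⁻¹ :=
    funext fun j => by
      change (Real.sqrt (deg j + τ))⁻¹ * (Real.sqrt (deg j + τ))⁻¹ = _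
      rw [← mul_inv, Real.mul_self_sqrt (hpos j).le]
  have hBGB := transpose_mul_mul_eq_one_of_eq_diagonal_mul_mul hV hVorth
  rw [hss] at hBGB
  have hlo := le_dotProduct_transpose_mul_diagonal_mul_mulVec hH
    (inv_nonneg.2 (add_iSup_pos hpos i).le) (inv_add_iSup_le hpos)
  have hhi := dotProduct_transpose_mul_diagonal_mul_mulVec_le hH
    (inv_nonneg.2 (add_iInf_pos hpos).le) (inv_le_inv_add_iInf hpos)
  have hμ := (mul_dotProduct_vecMul_le_of_transpose_mul_mul_eq_one hBGB hlo (Pi i)).trans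
    (dotProduct_self_le_one_of_stochastic (hPi_nonneg i) (hPi_rowsum i))
  have hν := (one_le_card_mul_dotProduct_self_of_sum_eq_one (hPi_rowsum i)).trans
    (mul_le_mul_of_nonneg_left
      (dotProduct_self_le_mul_dotProduct_vecMul_of_transpose_mul_mul_eq_one hBGB hhi (Pi i))
      (Nat.cast_nonneg _))
  rw [div_rowNorm_eq_of_row_eq_smul (inv_pos.2 (Real.sqrt_pos.2 (hpos i)))
    (by rw [hV]; exact diagonal_mul_mul_apply s Pi B i), mul_div_assoc, div_eq_inv_mul,
    div_eq_inv_mul]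
  exact sqrt_le_inv_sqrt_and_inv_sqrt_le_sqrt (dotProduct_self_nonneg _) hμ
    (by simpa only [Fintype.card_fin, mul_assoc] using hν)

/-- from the proof of Lemma B.2: for every node `i`,
`√(λ_K(Π'Π)/(τ+δ_max)) ≤ 𝒟_τ^{-1/2}(i,i)/‖V(i,:)‖ ≤ √(K λ₁(Π'Π)/(τ+δ_min))`. -/
theorem stmt_19
    {n K : ℕ} (hn : 0 < n) (hK : 0 < K) (hKn : K ≤ n)
    (Pi : Matrix (Fin n) (Fin K) ℝ)
    (hPi_nonneg : ∀ i k, 0 ≤ Pi i k)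
    (hPi_rowsum : ∀ i, ∑ k, Pi i k = 1)
    (hPi_rank : Pi.rank = K)
    (hpure : ∀ k : Fin K, ∃ i : Fin n, ∀ l, Pi i l = if l = k then 1 else 0)
    (Pt : Matrix (Fin K) (Fin K) ℝ)
    (hPt_symm : Pt.IsSymm)
    (hPt_nonneg : ∀ k l, 0 ≤ Pt k l)
    (hPt_rank : Pt.rank = K)
    (hPt_le_one : ∀ k l, Pt k l ≤ 1)
    (hPt_max : ∃ k l, Pt k l = 1)
    (ρ τ : ℝ) (hρ0 : 0 < ρ) (hρ1 : ρ ≤ 1) (hτ : 0 ≤ τ)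
    (Om : Matrix (Fin n) (Fin n) ℝ) (hOm : Om = Pi * (ρ • Pt) * Piᵀ)
    (deg : Fin n → ℝ) (hdeg : ∀ i, deg i = ∑ j, Om i j)
    (hpos : ∀ i, 0 < deg i + τ)
    (Ltau : Matrix (Fin n) (Fin n) ℝ)
    (hLtau : Ltau = Matrix.diagonal (fun i => (Real.sqrt (deg i + τ))⁻¹) * Om *
      Matrix.diagonal (fun i => (Real.sqrt (deg i + τ))⁻¹))
    (Idx : Fin K → Fin n) (hIdx : Pi.submatrix Idx id = 1)
    (V : Matrix (Fin n) (Fin K) ℝ) (e : Fin K → ℝ)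
    (hVorth : Vᵀ * V = 1) (he : ∀ k, e k ≠ 0)
    (hVE : Ltau = V * Matrix.diagonal e * Vᵀ)
    (hVrow : ∀ i, V i ≠ 0)
    (hH : (Piᵀ * Pi).IsHermitian) :
    ∀ i : Fin n,
      Real.sqrt ((⨅ k, hH.eigenvalues k) / (τ + ⨆ j, deg j)) ≤
        (Real.sqrt (deg i + τ))⁻¹ / rowNorm V i ∧
      (Real.sqrt (deg i + τ))⁻¹ / rowNorm V i ≤
        Real.sqrt ((K : ℝ) * (⨆ k, hH.eigenvalues k) / (τ + ⨅ j, deg j)) :=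
  stmt_19_general Pi hPi_nonneg hPi_rowsum Pt ρ τ Om hOm deg hpos Ltau hLtau V e hVorth he hVE hH
end
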